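/- arXiv:0708.1745 — 2 statements merged into one kernel-verified Lean document; each statement's English description precedes it below -/
import Mathlib

section
/- For every natural number n, every natural number p with p ≤ n, and all real numbers K, L, M: ∑_{r=0}^{n-p} C(L+r-1, r) · C(K+L+n+r-1, p) · C(M+n-r-1, n-p-r) = ∑_{t=0}^{min(p, n-p)} (-1)^t · C(-L, t) · C(K+L+n-1, p-t) · C(L+M+n-1, n-p-t). -/
open Finset Polynomial

noncomputable def gbinom (x : ℝ) (m : ℕ) : ℝ :=
  (∏ i ∈ Finset.range m, (x - i)) / m.factorial

lemma gbinom_eq_choose (x : ℝ) (m : ℕ) : gbinom x m = Ring.choose x m := by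
  have h : (descPochhammer ℤ m).smeval x = ∏ i ∈ range m, (x - i) := by
    induction m with
    | zero => simp [descPochhammer_zero, Polynomial.smeval_one]
    | succ k ih =>
      rw [descPochhammer_succ_right, Polynomial.smeval_mul, ih, prod_range_succ]
      simp [Polynomial.smeval_sub, Polynomial.smeval_X, Polynomial.smeval_natCast]
  have h2 := Ring.descPochhammer_eq_factorial_smul_choose x m
  rw [h, nsmul_eq_mul] at h2
  rw [gbinom, h2]
  have : (m.factorial : ℝ) ≠ 0 := Nat.cast_ne_zero.mpr m.factorial_ne_zero
  field_simp

lemma gbinom_shift (x : ℝ) (m : ℕ) : gbinom (x + m - 1) m = (-1)^m * gbinom (-x) m := by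
  unfold gbinom
  have h1 : ∏ i ∈ range m, (x + m - 1 - i) = ∏ i ∈ range m, (x + i) := by
    rw [← Finset.prod_range_reflect (fun i => x + i) m]
    refine Finset.prod_congr rfl fun j hj => ?_
    have hj' : j < m := mem_range.mp hj
    have : ((m - 1 - j : ℕ) : ℝ) = (m : ℝ) - 1 - j := by
      have h2 : 1 + j ≤ m := by omega
      push_cast [Nat.sub_sub, Nat.cast_sub h2]
      ring
    rw [this]; ring
  have h2 : ∏ i ∈ range m, (-x - i) = (-1)^m * ∏ i ∈ range m, (x + i) := by
    calc ∏ i ∈ range m, (-x - i) = ∏ i ∈ range m, ((-1) * (x + i)) := by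
          exact Finset.prod_congr rfl fun i _ => by ring
      _ = (-1)^m * ∏ i ∈ range m, (x + i) := by
          rw [Finset.prod_mul_distrib, prod_const, card_range]
  rw [h1, h2, ← mul_div_assoc, ← mul_assoc, ← pow_add, ← two_mul, pow_mul]
  simp

lemma gbinom_add (x y : ℝ) (k : ℕ) :
    gbinom (x + y) k = ∑ t ∈ range (k+1), gbinom x t * gbinom y (k - t) := by
  simp only [gbinom_eq_choose]
  rw [Ring.add_choose_eq k (Commute.all x y), Finset.Nat.sum_antidiagonal_eq_sum_range_succ_mk]

lemma gbinom_mul_choose (x : ℝ) (r t : ℕ) (h : t ≤ r) :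
    (r.choose t : ℝ) * gbinom x r = gbinom x t * gbinom (x - t) (r - t) := by
  simp only [gbinom_eq_choose]
  rw [← Ring.choose_smul_choose x h, nsmul_eq_mul]

lemma gbinom_key (a c : ℝ) (q t : ℕ) (ht : t ≤ q) :
    ∑ r ∈ range (q+1), (r.choose t : ℝ) * gbinom (a + r - 1) r * gbinom (c - r) (q - r)
      = (-1)^t * gbinom (-a) t * gbinom (a + c) (q - t) := by
  have hsub : Ico t (q+1) ⊆ range (q+1) := by
    intro x hx; simp only [mem_Ico, mem_range] at *; omega
  rw [← Finset.sum_subset hsub (by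
    intro r hr hr'
    simp only [mem_range] at hr
    simp only [mem_Ico, not_and, not_le] at hr'
    have : r < t := by omega
    rw [Nat.choose_eq_zero_of_lt this]
    simp)]
  rw [Finset.sum_Ico_eq_sum_range]
  have hq1 : q + 1 - t = (q - t) + 1 := by omega
  rw [hq1]
  have step : ∀ s ∈ range ((q-t)+1),
      (((t+s).choose t : ℝ)) * gbinom (a + ↑(t+s) - 1) (t+s) * gbinom (c - ↑(t+s)) (q - (t+s))
      = ((-1)^q * gbinom (-a) t) * (gbinom (-a - t) s * gbinom (-(c - q + 1)) ((q-t) - s)) := by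
    intro s hs
    have hs' : s ≤ q - t := Nat.lt_succ_iff.mp (mem_range.mp hs)
    have hts : t + s ≤ q := by omega
    have h1 : gbinom (a + (↑(t+s) : ℝ) - 1) (t+s) = (-1)^(t+s) * gbinom (-a) (t+s) :=
      gbinom_shift a (t+s)
    have h2 : ((t+s).choose t : ℝ) * gbinom (-a) (t+s) =
        gbinom (-a) t * gbinom (-a - t) s := by
      have := gbinom_mul_choose (-a) (t+s) t (Nat.le_add_right t s)
      simpa using this
    have hk : q - (t+s) = (q-t) - s := by omega
    have hcast2 : (((q-t)-s : ℕ) : ℝ) = (q : ℝ) - ↑t - ↑s := by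
      rw [Nat.sub_sub, Nat.cast_sub hts]; push_cast; ring
    have h3 : gbinom (c - (↑(t+s) : ℝ)) (q - (t+s)) =
        (-1)^((q-t)-s) * gbinom (-(c - q + 1)) ((q-t)-s) := by
      rw [hk]
      have hcast : c - (↑(t+s) : ℝ) = (c - q + 1) + (((q-t)-s : ℕ) : ℝ) - 1 := by
        rw [hcast2]; push_cast; ring
      rw [hcast, gbinom_shift]
    rw [h1, h3]
    have hsign : ((-1:ℝ))^(t+s) * (-1)^((q-t)-s) = (-1)^q := by
      rw [← pow_add]; congr 1; omega
    have : ((t+s).choose t : ℝ) * ((-1)^(t+s) * gbinom (-a) (t+s)) *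
        ((-1)^((q-t)-s) * gbinom (-(c-q+1)) ((q-t)-s))
        = (((-1:ℝ))^(t+s) * (-1)^((q-t)-s)) * (((t+s).choose t : ℝ) * gbinom (-a) (t+s)) *
          gbinom (-(c-q+1)) ((q-t)-s) := by ring
    rw [this, hsign, h2]
    ring
  rw [Finset.sum_congr rfl step, ← Finset.mul_sum, ← gbinom_add]
  have h5 : gbinom ((-a - ↑t) + (-(c - ↑q + 1))) (q-t) = (-1)^(q-t) * gbinom (a+c) (q-t) := by
    have hcast : (-a - (↑t:ℝ)) + (-(c - ↑q + 1)) = (-(a+c)) + ((q-t : ℕ) : ℝ) - 1 := by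
      rw [Nat.cast_sub ht]; push_cast; ring
    rw [hcast, gbinom_shift, neg_neg]
  rw [h5]
  have hsign2 : ((-1:ℝ))^q * (-1)^(q-t) = (-1)^t := by
    rw [← pow_add]
    have : q + (q-t) = 2*(q-t) + t := by omega
    rw [this, pow_add, pow_mul]; simp
  calc ((-1:ℝ))^q * gbinom (-a) t * ((-1)^(q-t) * gbinom (a+c) (q-t))
      = ((-1:ℝ))^q * (-1)^(q-t) * gbinom (-a) t * gbinom (a+c) (q-t) := by ring
    _ = (-1)^t * gbinom (-a) t * gbinom (a+c) (q-t) := by rw [hsign2]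

lemma gbinom_natCast (r t : ℕ) : gbinom (r : ℝ) t = r.choose t := by
  rw [gbinom_eq_choose, Ring.choose_natCast]

theorem eholzer_lhs_resummation (n p : ℕ) (hp : p ≤ n) (K L M : ℝ) :
    ∑ r ∈ Finset.range (n - p + 1),
      gbinom (L + r - 1) r * gbinom (K + L + n + r - 1) p *
        gbinom (M + n - r - 1) (n - p - r)
      =
    ∑ t ∈ Finset.range (min p (n - p) + 1),
      (-1 : ℝ) ^ t * gbinom (-L) t * gbinom (K + L + n - 1) (p - t) *
        gbinom (L + M + n - 1) (n - p - t) := by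
  calc ∑ r ∈ Finset.range (n - p + 1),
      gbinom (L + r - 1) r * gbinom (K + L + n + r - 1) p *
        gbinom (M + n - r - 1) (n - p - r)
      = ∑ r ∈ range (n-p+1), ∑ t ∈ range (p+1),
          gbinom (K+L+↑n-1) (p-t) *
            ((r.choose t : ℝ) * gbinom (L+↑r-1) r * gbinom ((M+↑n-1) - ↑r) (n-p-r)) := by
        refine sum_congr rfl fun r hr => ?_
        have h1 : K + L + ↑n + ↑r - 1 = (↑r : ℝ) + (K + L + ↑n - 1) := by ring
        rw [h1, gbinom_add, mul_sum, sum_mul]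
        refine sum_congr rfl fun t ht => ?_
        rw [gbinom_natCast]
        have h2 : M + ↑n - ↑r - 1 = (M + ↑n - 1) - (↑r : ℝ) := by ring
        rw [h2]; ring
    _ = ∑ t ∈ range (p+1), gbinom (K+L+↑n-1) (p-t) *
          ∑ r ∈ range (n-p+1),
            (r.choose t : ℝ) * gbinom (L+↑r-1) r * gbinom ((M+↑n-1) - ↑r) (n-p-r) := by
        rw [Finset.sum_comm]
        exact sum_congr rfl fun t _ => by rw [mul_sum]
    _ = ∑ t ∈ Finset.range (min p (n - p) + 1),
      (-1 : ℝ) ^ t * gbinom (-L) t * gbinom (K + L + n - 1) (p - t) *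
        gbinom (L + M + n - 1) (n - p - t) := by
        have hsub : range (min p (n-p) + 1) ⊆ range (p+1) := by
          intro x hx; simp only [mem_range] at *; omega
        rw [← Finset.sum_subset hsub (by
          intro t ht ht'
          simp only [mem_range] at ht ht'
          have htq : n - p < t := by omega
          have : ∑ r ∈ range (n-p+1),
              (r.choose t : ℝ) * gbinom (L+↑r-1) r * gbinom ((M+↑n-1) - ↑r) (n-p-r) = 0 := by
            refine Finset.sum_eq_zero fun r hr => ?_
            have : r < t := by simp only [mem_range] at hr; omega
            rw [Nat.choose_eq_zero_of_lt this]; simp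
          rw [this, mul_zero])]
        refine sum_congr rfl fun t ht => ?_
        have ht' : t ≤ n - p := by simp only [mem_range] at ht; omega
        rw [gbinom_key L (M+↑n-1) (n-p) t ht']
        have h3 : L + (M + ↑n - 1) = L + M + ↑n - 1 := by ring
        rw [h3]; ring
end

section
/- For every natural number n and all real numbers Y, Z (standing for 2y and 2z): ∑_{r=0}^{n} C(Y-r, r) · ( C(Z-n+r, n-r) + 2·C(Z-n+r, n-r-1) ) = C(Y+Z-n+1, n), where the term C(Z-n+r, n-r-1) is taken to be 0 when r = n. -/
@[simp] lemma gbinom_zero (x : ℝ) : gbinom x 0 = 1 := by simp [gbinom]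

lemma gbinom_pascal (x : ℝ) (m : ℕ) :
    gbinom (x + 1) (m + 1) = gbinom x (m + 1) + gbinom x m := by
  have h1 : ∏ i ∈ Finset.range (m + 1), (x + 1 - i) = (∏ i ∈ Finset.range m, (x - i)) * (x + 1) := by
    rw [Finset.prod_range_succ']
    have : (x + 1 - (0:ℕ)) = x + 1 := by push_cast; ring
    rw [this]
    congr 1
    apply Finset.prod_congr rfl
    intro i _
    push_cast
    ring
  have h2 : ∏ i ∈ Finset.range (m + 1), (x - i) = (∏ i ∈ Finset.range m, (x - i)) * (x - m) :=
    Finset.prod_range_succ _ _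
  unfold gbinom
  rw [h1, h2, Nat.factorial_succ]
  have hm : (m.factorial : ℝ) ≠ 0 := Nat.cast_ne_zero.mpr m.factorial_ne_zero
  have hm1 : ((m+1 : ℕ) : ℝ) ≠ 0 := by positivity
  push_cast
  field_simp
  ring

lemma gbinom_natCast_s7 (a b : ℕ) : gbinom (a : ℝ) b = (a.choose b : ℝ) := by
  rcases le_or_gt b a with h | h
  · have hp : ∏ i ∈ Finset.range b, ((a : ℝ) - i) = (a.descFactorial b : ℝ) := by
      rw [Nat.descFactorial_eq_prod_range]
      push_cast [Nat.cast_prod]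
      apply Finset.prod_congr rfl
      intro i hi
      have : i ≤ a := le_trans (Finset.mem_range.mp hi).le h
      rw [Nat.cast_sub this]
    rw [gbinom, hp, Nat.choose_eq_descFactorial_div_factorial,
      Nat.cast_div (Nat.factorial_dvd_descFactorial a b) (Nat.cast_ne_zero.mpr b.factorial_ne_zero)]
  · rw [gbinom, Finset.prod_eq_zero (Finset.mem_range.mpr h) (by simp), Nat.choose_eq_zero_of_lt h]
    simp

open Polynomial in
noncomputable def pbinom (m : ℕ) : Polynomial ℝ :=
  (∏ i ∈ Finset.range m, (X - C (i : ℝ))) * C ((m.factorial : ℝ))⁻¹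

open Polynomial in
lemma pbinom_eval (x : ℝ) (m : ℕ) : (pbinom m).eval x = gbinom x m := by
  simp [pbinom, gbinom, div_eq_mul_inv, eval_prod]

open Polynomial in
lemma periodic_const {f : ℝ → ℝ} (p : ℝ[X]) (hp : ∀ x, p.eval x = f x)
    (h : ∀ x, f x = f (x - 1)) (a b : ℝ) : f a = f b := by
  have key : ∀ k : ℕ, f (a - k) = f a := by
    intro k
    induction k with
    | zero => simp
    | succ k ih =>
      rw [← ih]
      have e : a - ((k:ℝ) + 1) = (a - k) - 1 := by ring
      push_cast
      rw [e, ← h (a - k)]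
  set q : ℝ[X] := p.comp (C a - X) with hq
  have hqe : ∀ x : ℝ, q.eval x = f (a - x) := by
    intro x; simp [hq, eval_comp, hp]
  have hqc : q = C (f a) := by
    apply eq_of_infinite_eval_eq
    apply Set.Infinite.mono (s := Set.range ((↑·) : ℕ → ℝ))
    · rintro x ⟨k, rfl⟩
      simp only [Set.mem_setOf_eq, hqe, eval_C, key]
    · exact Set.infinite_range_of_injective Nat.cast_injective
  have := hqe (a - b)
  rw [hqc] at this
  simpa using this

noncomputable def lhsS (n : ℕ) (Y Z : ℝ) : ℝ :=
  ∑ r ∈ Finset.range (n + 1),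
    gbinom (Y - r) r *
      (gbinom (Z - n + r) (n - r)
        + 2 * (if r = n then 0 else gbinom (Z - n + r) (n - r - 1)))

noncomputable def rhsS (n : ℕ) (Y Z : ℝ) : ℝ := gbinom (Y + Z - n + 1) n

lemma stepZ (n : ℕ) (Y z : ℝ) :
    lhsS (n+1) Y z - lhsS (n+1) Y (z-1) = lhsS n Y (z-2) := by
  unfold lhsS
  rw [← Finset.sum_sub_distrib, Finset.sum_range_succ]
  have hlast : gbinom (Y - ↑(n+1)) (n+1) *
      (gbinom (z - ↑(n+1) + ↑(n+1)) ((n+1) - (n+1))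
        + 2 * (if n+1 = n+1 then 0 else gbinom (z - ↑(n+1) + ↑(n+1)) ((n+1) - (n+1) - 1)))
      - gbinom (Y - ↑(n+1)) (n+1) *
      (gbinom ((z-1) - ↑(n+1) + ↑(n+1)) ((n+1) - (n+1))
        + 2 * (if n+1 = n+1 then 0 else gbinom ((z-1) - ↑(n+1) + ↑(n+1)) ((n+1) - (n+1) - 1))) = 0 := by
    simp [Nat.sub_self]
  rw [hlast, add_zero]
  apply Finset.sum_congr rfl
  intro r hr
  have hr' : r ≤ n := by simpa [Nat.lt_succ_iff] using hr
  have hne : r ≠ n + 1 := by omega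
  simp only [if_neg hne]
  have e1 : z - (↑(n+1) : ℝ) + ↑r = ((z-2) - ↑n + ↑r) + 1 := by push_cast; ring
  have e2 : (z-1) - (↑(n+1) : ℝ) + ↑r = (z-2) - ↑n + ↑r := by push_cast; ring
  have h2 : n + 1 - r - 1 = n - r := by omega
  rw [e1, e2, h2]
  rcases eq_or_lt_of_le hr' with rfl | hlt
  · have h1 : r + 1 - r = 0 + 1 := by omega
    have h3 : r - r = 0 := by omega
    rw [h1, h3, gbinom_pascal _ 0, if_pos rfl]
    simp only [gbinom_zero]
    ring
  · obtain ⟨k, hk⟩ : ∃ k, n - r = k + 1 := ⟨n - r - 1, by omega⟩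
    have h1 : n + 1 - r = (k + 1) + 1 := by omega
    have h4 : n - r - 1 = k := by omega
    rw [if_neg (by omega : r ≠ n), h4, h1, hk, gbinom_pascal _ (k+1), gbinom_pascal _ k]
    ring

lemma stepZR (n : ℕ) (Y z : ℝ) :
    rhsS (n+1) Y z - rhsS (n+1) Y (z-1) = rhsS n Y (z-2) := by
  unfold rhsS
  have e1 : Y + z - (↑(n+1) : ℝ) + 1 = (Y + (z-2) - ↑n + 1) + 1 := by push_cast; ring
  have e2 : Y + (z-1) - (↑(n+1) : ℝ) + 1 = Y + (z-2) - ↑n + 1 := by push_cast; ring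
  rw [e1, e2, gbinom_pascal]
  ring

lemma stepY (n : ℕ) (y Z : ℝ) :
    lhsS (n+1) y Z - lhsS (n+1) (y-1) Z = lhsS n (y-2) Z := by
  unfold lhsS
  rw [← Finset.sum_sub_distrib, Finset.sum_range_succ']
  have h0 : gbinom (y - ↑(0:ℕ)) 0 *
      (gbinom (Z - ↑(n+1) + ↑(0:ℕ)) (n+1-0) + 2 * (if 0 = n+1 then 0 else gbinom (Z - ↑(n+1) + ↑(0:ℕ)) (n+1-0-1)))
      - gbinom ((y-1) - ↑(0:ℕ)) 0 *
      (gbinom (Z - ↑(n+1) + ↑(0:ℕ)) (n+1-0) + 2 * (if 0 = n+1 then 0 else gbinom (Z - ↑(n+1) + ↑(0:ℕ)) (n+1-0-1))) = 0 := by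
    simp only [gbinom_zero]
    ring
  rw [h0, add_zero]
  apply Finset.sum_congr rfl
  intro i hi
  have e1 : y - (↑(i+1) : ℝ) = ((y-2) - ↑i) + 1 := by push_cast; ring
  have e2 : (y-1) - (↑(i+1) : ℝ) = (y-2) - ↑i := by push_cast; ring
  have e3 : Z - (↑(n+1) : ℝ) + ↑(i+1) = Z - ↑n + ↑i := by push_cast; ring
  have h1 : n + 1 - (i+1) = n - i := by omega
  have h2 : n + 1 - (i+1) - 1 = n - i - 1 := by omega
  simp only [add_left_inj]
  rw [e1, e2, e3, h1, gbinom_pascal _ i]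
  ring

lemma stepYR (n : ℕ) (y Z : ℝ) :
    rhsS (n+1) y Z - rhsS (n+1) (y-1) Z = rhsS n (y-2) Z := by
  unfold rhsS
  have e1 : y + Z - (↑(n+1) : ℝ) + 1 = ((y-2) + Z - ↑n + 1) + 1 := by push_cast; ring
  have e2 : (y-1) + Z - (↑(n+1) : ℝ) + 1 = (y-2) + Z - ↑n + 1 := by push_cast; ring
  rw [e1, e2, gbinom_pascal]
  ring

open Polynomial in
lemma exists_polyZ (n : ℕ) (Y : ℝ) :
    ∃ p : ℝ[X], ∀ z, p.eval z = lhsS n Y z - rhsS n Y z := by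
  refine ⟨(∑ r ∈ Finset.range (n+1), C (gbinom (Y - r) r) *
      ((pbinom (n-r)).comp (X + C ((r:ℝ) - n)) +
        C 2 * (if r = n then 0 else (pbinom (n-r-1)).comp (X + C ((r:ℝ) - n)))))
      - (pbinom n).comp (X + C (Y - n + 1)), fun z => ?_⟩
  simp only [eval_sub, eval_finset_sum, eval_mul, eval_add, eval_C, eval_comp, eval_X,
    apply_ite (eval (z + (Y - ↑n + 1))), apply_ite (eval _), eval_zero, pbinom_eval]
  unfold lhsS rhsS
  congr 1
  · apply Finset.sum_congr rfl
    intro r _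
    have e : z + ((r:ℝ) - n) = z - n + r := by ring
    rw [e]
  · have e : z + (Y - (n:ℝ) + 1) = Y + z - n + 1 := by ring
    rw [e]

open Polynomial in
lemma exists_polyY (n : ℕ) (Z : ℝ) :
    ∃ p : ℝ[X], ∀ y, p.eval y = lhsS n y Z - rhsS n y Z := by
  refine ⟨(∑ r ∈ Finset.range (n+1), (pbinom r).comp (X - C (r:ℝ)) *
      C (gbinom (Z - n + r) (n-r) + 2 * (if r = n then 0 else gbinom (Z - n + r) (n-r-1))))
      - (pbinom n).comp (X + C (Z - n + 1)), fun y => ?_⟩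
  simp only [eval_sub, eval_finset_sum, eval_mul, eval_add, eval_C, eval_comp, eval_X,
    pbinom_eval]
  unfold lhsS rhsS
  congr 1
  have e : y + (Z - (n:ℝ) + 1) = y + Z - n + 1 := by ring
  rw [e]

lemma base (n : ℕ) : lhsS n n n = rhsS n n n := by
  unfold lhsS rhsS
  have hR : (↑n : ℝ) + ↑n - ↑n + 1 = ((n+1 : ℕ) : ℝ) := by push_cast; ring
  rw [hR, gbinom_natCast_s7, Nat.choose_succ_self_right]
  have hterm : ∀ r ∈ Finset.range (n+1),
      gbinom ((n:ℝ) - r) r * (gbinom ((n:ℝ) - n + r) (n - r)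
        + 2 * (if r = n then 0 else gbinom ((n:ℝ) - n + r) (n - r - 1)))
      = ((n-r).choose r : ℝ) * ((r.choose (n-r) : ℝ)
        + 2 * (if r = n then 0 else (r.choose (n-r-1) : ℝ))) := by
    intro r hr
    have hr' : r ≤ n := by simpa [Nat.lt_succ_iff] using hr
    have e1 : (n:ℝ) - r = ((n - r : ℕ) : ℝ) := by
      rw [Nat.cast_sub hr']
    have e2 : (n:ℝ) - n + r = ((r : ℕ) : ℝ) := by ring
    rw [e1, e2, gbinom_natCast_s7, gbinom_natCast_s7, gbinom_natCast_s7]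
  rw [Finset.sum_congr rfl hterm]
  rw [Finset.sum_eq_single_of_mem (n/2) (Finset.mem_range.mpr (by omega))]
  · rcases Nat.even_or_odd n with ⟨m, hm⟩ | ⟨m, hm⟩
    · subst hm
      have h0 : (m + m)/2 = m := by omega
      have h1 : m + m - m = m := by omega
      rw [h0, h1, Nat.choose_self]
      rcases Nat.eq_zero_or_pos m with rfl | hm0
      · norm_num
      · rw [if_neg (by omega : m ≠ m + m)]
        have h3 : m.choose (m - 1) = m := by
          have h := Nat.choose_symm (by omega : 1 ≤ m)
          rw [Nat.choose_one_right] at h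
          exact h
        rw [h3]
        push_cast
        ring
    · subst hm
      have h0 : (2*m+1)/2 = m := by omega
      have h2 : 2*m+1 - m = m + 1 := by omega
      rw [h0, h2, Nat.choose_succ_self_right,
        Nat.choose_eq_zero_of_lt (by omega : m < m+1)]
      have h4 : m + 1 - 1 = m := rfl
      rw [h4, Nat.choose_self, if_neg (by omega : m ≠ 2*m+1)]
      push_cast
      ring
  · intro r hr hne
    have hr' : r ≤ n := by simpa [Nat.lt_succ_iff] using Finset.mem_range.mp hr
    rcases (by omega : n < 2*r ∨ 2*r + 1 < n) with h | h
    · rw [Nat.choose_eq_zero_of_lt (by omega : n - r < r)]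
      norm_num
    · rw [Nat.choose_eq_zero_of_lt (by omega : r < n - r),
        Nat.choose_eq_zero_of_lt (by omega : r < n - r - 1),
        if_neg (by omega : r ≠ n)]
      norm_num

lemma main (n : ℕ) : ∀ Y Z : ℝ, lhsS n Y Z = rhsS n Y Z := by
  induction n with
  | zero =>
    intro Y Z
    simp [lhsS, rhsS]
  | succ n ih =>
    intro Y Z
    -- periodic in Z
    have hZ : ∀ z : ℝ, (lhsS (n+1) Y z - rhsS (n+1) Y z)
        = (lhsS (n+1) Y (z-1) - rhsS (n+1) Y (z-1)) := by
      intro z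
      have h1 := stepZ n Y z
      have h2 := stepZR n Y z
      have h3 := ih Y (z-2)
      linarith
    obtain ⟨p, hp⟩ := exists_polyZ (n+1) Y
    have cZ := periodic_const p hp hZ Z (((n+1:ℕ)):ℝ)
    -- periodic in Y at Z = n+1
    have hY : ∀ y : ℝ, (lhsS (n+1) y ((n+1:ℕ):ℝ) - rhsS (n+1) y ((n+1:ℕ):ℝ))
        = (lhsS (n+1) (y-1) ((n+1:ℕ):ℝ) - rhsS (n+1) (y-1) ((n+1:ℕ):ℝ)) := by
      intro y
      have h1 := stepY n y ((n+1:ℕ):ℝ)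
      have h2 := stepYR n y ((n+1:ℕ):ℝ)
      have h3 := ih (y-2) ((n+1:ℕ):ℝ)
      linarith
    obtain ⟨q, hq⟩ := exists_polyY (n+1) (((n+1:ℕ)):ℝ)
    have cY := periodic_const q hq hY Y (((n+1:ℕ)):ℝ)
    have hb := base (n+1)
    have : lhsS (n+1) ((n+1:ℕ):ℝ) ((n+1:ℕ):ℝ) - rhsS (n+1) ((n+1:ℕ):ℝ) ((n+1:ℕ):ℝ) = 0 := by
      rw [hb]; ring
    linarith

theorem zagier_half_simplified (n : ℕ) (Y Z : ℝ) :
    ∑ r ∈ Finset.range (n + 1),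
      gbinom (Y - r) r *
        (gbinom (Z - n + r) (n - r)
          + 2 * (if r = n then 0 else gbinom (Z - n + r) (n - r - 1)))
      = gbinom (Y + Z - n + 1) n :=
  main n Y Z
end
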